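/- Let A be symmetric positive definite with distinct largest eigenvalue λ₁ > λ₂ ≥ … ≥ λₙ > 0 and unit eigenvector q₁ for λ₁. If an n×n matrix E satisfies ‖E‖_F² = c > 0 and ‖EA⁻¹‖_F² = c/λ₁², then every column of QᵀEQ except the first vanishes, i.e., E = v q₁ᵀ for some vector v ∈ ℝⁿ. -/
import Mathlib


open Matrix BigOperators

noncomputable def frobSq {n : ℕ} (M : Matrix (Fin n) (Fin n) ℝ) : ℝ :=
  ∑ i, ∑ j, (M i j) ^ 2

lemma frobSq_eq_trace {n : ℕ} (M : Matrix (Fin n) (Fin n) ℝ) :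
    frobSq M = Matrix.trace (M * Mᵀ) := by
  simp [frobSq, Matrix.trace, Matrix.diag, Matrix.mul_apply, sq]

lemma frobSq_mul_orth_right {n : ℕ} (M Q : Matrix (Fin n) (Fin n) ℝ)
    (hQ : Qᵀ * Q = 1) : frobSq (M * Qᵀ) = frobSq M := by
  rw [frobSq_eq_trace, frobSq_eq_trace, Matrix.transpose_mul, Matrix.transpose_transpose]
  rw [show M * Qᵀ * (Q * Mᵀ) = M * (Qᵀ * Q) * Mᵀ by noncomm_ring, hQ, Matrix.mul_one]

lemma frobSq_mul_orth_left {n : ℕ} (M Q : Matrix (Fin n) (Fin n) ℝ)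
    (hQ : Qᵀ * Q = 1) : frobSq (Q * M) = frobSq M := by
  rw [frobSq_eq_trace, frobSq_eq_trace, Matrix.transpose_mul]
  rw [show Q * M * (Mᵀ * Qᵀ) = Q * (M * Mᵀ) * Qᵀ by noncomm_ring]
  rw [Matrix.trace_mul_cycle, ← Matrix.mul_assoc, hQ, Matrix.one_mul]

theorem equality_case_simple_largest_eigenvalue
    {n : ℕ} (A Q E : Matrix (Fin (n + 1)) (Fin (n + 1)) ℝ)
    (lam : Fin (n + 1) → ℝ) (c : ℝ)
    (hQ : Qᵀ * Q = 1)
    (hA : A = Q * Matrix.diagonal lam * Qᵀ)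
    (hpos : ∀ j, 0 < lam j)
    (hsimple : ∀ j, j ≠ 0 → lam j < lam 0)
    (hc : 0 < c)
    (hbudget : frobSq E = c)
    (heq : frobSq (E * A⁻¹) = c / (lam 0) ^ 2) :
    (∀ j, j ≠ 0 → ∀ i, (Qᵀ * E * Q) i j = 0) ∧
      ∃ v : Fin (n + 1) → ℝ, E = Matrix.vecMulVec v (fun i => Q i 0) := by
  have hQQT : Q * Qᵀ = 1 := mul_eq_one_comm.mp hQ
  set F := Qᵀ * E * Q with hF
  have hEQF : E = Q * F * Qᵀ := by
    rw [hF]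
    rw [show Q * (Qᵀ * E * Q) * Qᵀ = (Q * Qᵀ) * E * (Q * Qᵀ) by noncomm_ring, hQQT,
      Matrix.one_mul, Matrix.mul_one]
  -- inverse of A
  have hlamne : ∀ j, lam j ≠ 0 := fun j => (hpos j).ne'
  have hAinv : A⁻¹ = Q * Matrix.diagonal (fun j => (lam j)⁻¹) * Qᵀ := by
    apply Matrix.inv_eq_right_inv
    rw [hA]
    rw [show Q * Matrix.diagonal lam * Qᵀ * (Q * Matrix.diagonal (fun j => (lam j)⁻¹) * Qᵀ)
        = Q * (Matrix.diagonal lam * ((Qᵀ * Q) * Matrix.diagonal (fun j => (lam j)⁻¹))) * Qᵀ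
        by noncomm_ring, hQ, Matrix.one_mul, Matrix.diagonal_mul_diagonal]
    have : (fun j => lam j * (lam j)⁻¹) = fun _ : Fin (n+1) => (1:ℝ) := by
      funext j; exact mul_inv_cancel₀ (hlamne j)
    rw [this, Matrix.diagonal_one, Matrix.mul_one, hQQT]
  -- E * A⁻¹ = Q * (F * D') * Qᵀ
  have hEA : E * A⁻¹ = Q * (F * Matrix.diagonal (fun j => (lam j)⁻¹)) * Qᵀ := by
    rw [hAinv, hEQF]
    rw [show Q * F * Qᵀ * (Q * Matrix.diagonal (fun j => (lam j)⁻¹) * Qᵀ)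
        = Q * (F * ((Qᵀ * Q) * Matrix.diagonal (fun j => (lam j)⁻¹))) * Qᵀ by noncomm_ring,
      hQ, Matrix.one_mul]
  have hfrobF : frobSq F = c := by
    have : frobSq E = frobSq F := by
      rw [hEQF, frobSq_mul_orth_right _ _ hQ, frobSq_mul_orth_left _ _ hQ]
    rw [← this, hbudget]
  have hfrobFD : frobSq (E * A⁻¹)
      = ∑ j, ∑ i, (F i j) ^ 2 * ((lam j) ^ 2)⁻¹ := by
    rw [hEA, frobSq_mul_orth_right _ _ hQ, frobSq_mul_orth_left _ _ hQ]
    rw [frobSq]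
    rw [Finset.sum_comm]
    congr 1; funext j; congr 1; funext i
    rw [Matrix.mul_diagonal]
    rw [mul_pow, inv_pow]
  set S : Fin (n+1) → ℝ := fun j => ∑ i, (F i j) ^ 2 with hS
  have hSnn : ∀ j, 0 ≤ S j := fun j => Finset.sum_nonneg fun i _ => sq_nonneg _
  have hsum_eq : ∑ j, S j * ((lam 0) ^ 2)⁻¹ = ∑ j, S j * ((lam j) ^ 2)⁻¹ := by
    have h1 : ∑ j, S j * ((lam j) ^ 2)⁻¹ = c / (lam 0) ^ 2 := by
      rw [← heq, hfrobFD]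
      congr 1; funext j; rw [hS, Finset.sum_mul]
    have h2 : ∑ j, S j = c := by
      rw [← hfrobF, frobSq, Finset.sum_comm]
    rw [h1, ← Finset.sum_mul, h2, div_eq_mul_inv]
  have hterm_le : ∀ j ∈ Finset.univ, S j * ((lam 0) ^ 2)⁻¹ ≤ S j * ((lam j) ^ 2)⁻¹ := by
    intro j _
    apply mul_le_mul_of_nonneg_left _ (hSnn j)
    apply inv_anti₀ (pow_pos (hpos j) 2)
    apply pow_le_pow_left₀ (hpos j).le
    rcases eq_or_ne j 0 with rfl | h
    · exact le_refl _
    · exact (hsimple j h).le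
  have hall : ∀ j ∈ Finset.univ, S j * ((lam 0) ^ 2)⁻¹ = S j * ((lam j) ^ 2)⁻¹ :=
    (Finset.sum_eq_sum_iff_of_le hterm_le).mp hsum_eq
  have hSzero : ∀ j, j ≠ 0 → S j = 0 := by
    intro j hj
    have h := hall j (Finset.mem_univ j)
    by_contra hSne
    have hSpos : 0 < S j := lt_of_le_of_ne (hSnn j) (Ne.symm hSne)
    have hlt : ((lam 0) ^ 2)⁻¹ < ((lam j) ^ 2)⁻¹ := by
      apply inv_strictAnti₀ (pow_pos (hpos j) 2)
      exact pow_lt_pow_left₀ (hsimple j hj) (hpos j).le (by norm_num)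
    have := mul_lt_mul_of_pos_left hlt hSpos
    linarith [h]
  have hFzero : ∀ j, j ≠ 0 → ∀ i, F i j = 0 := by
    intro j hj i
    have := hSzero j hj
    rw [hS] at this
    have h0 : ∀ i ∈ Finset.univ, (F i j)^2 = 0 :=
      (Finset.sum_eq_zero_iff_of_nonneg (fun i _ => sq_nonneg _)).mp this
    have := h0 i (Finset.mem_univ i)
    exact pow_eq_zero_iff (by norm_num : 2 ≠ 0) |>.mp this
  refine ⟨hFzero, ⟨Q.mulVec (fun a => F a 0), ?_⟩⟩
  ext i k
  rw [hEQF]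
  rw [Matrix.vecMulVec_apply, Matrix.mul_apply]
  rw [Finset.sum_eq_single 0]
  · rw [Matrix.mul_apply, Matrix.transpose_apply, Matrix.mulVec, dotProduct]
  · intro b _ hb
    rw [Matrix.mul_apply]
    have : ∀ a, Q i a * F a b = 0 := fun a => by rw [hFzero b hb a, mul_zero]
    simp [this]
  · intro h; exact absurd (Finset.mem_univ 0) h
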